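/- Let A be a self-adjoint complex m×m matrix (m ≥ 2) and let P be an orthogonal projection on ℂ^m with ker P = span{v} for a unit vector v. Then the eigenvalues of A − tP (repeated with multiplicity) can be enumerated as λ_1(t), …, λ_m(t) for t > 0 in such a way that λ_1(t) → ⟨v, Av⟩ as t → ∞, and λ_j(t)/t → −1 as t → ∞ for each j = 2, …, m. -/

import Mathlib

/-!
Write `P = 1 - |v⟩⟨v|` and let `(bᵢ, μᵢ)` be an orthonormal eigenbasis of `A - tP`. Since
`Pv = 0`, `⟨v, Av⟩ = ∑ μᵢ |⟨v, bᵢ⟩|²`, so the largest eigenvalue `μ₀` is at least `⟨v, Av⟩`.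
Comparing this with the Rayleigh quotient `μᵢ = ⟨bᵢ, Abᵢ⟩ - t (1 - |⟨v, bᵢ⟩|²)` forces
`1 - |⟨v, b₀⟩|² ≤ 2‖A‖/t`. Hence `b₀` is `O(t^{-1/2})`-close to a multiple of `v`, which gives
`μ₀ ≤ ⟨v, Av⟩ + o(1)`, while every other `bᵢ` has `|⟨v, bᵢ⟩|² ≤ 2‖A‖/t`, so `μᵢ = -t + O(‖A‖)`.
-/

open MeasureTheory
open scoped Kronecker

noncomputable section

/-- Entrywise complex conjugate of a matrix (in the standard basis). -/
def mconj {ι κ : Type*} (X : Matrix ι κ ℂ) : Matrix ι κ ℂ :=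
  X.map (starRingEnd ℂ)

/-- `C^b X C^b` : `X` itself if `b = 0`, and the entrywise conjugate otherwise. -/
def conjIf {ι : Type*} (b : ℕ) (X : Matrix ι ι ℂ) : Matrix ι ι ℂ :=
  if b = 0 then X else mconj X

/-- The Thue–Morse sequence `β` : `β 0 = 0`, `β (2j) = β j`, `β (2j+1) = 1 - β j`. -/
def tm : ℕ → ℕ
  | 0 => 0
  | (n + 1) => if (n + 1) % 2 = 0 then tm ((n + 1) / 2) else 1 - tm ((n + 1) / 2)
  decreasing_by all_goals omega

/-- The (principal) logarithm of a positive definite matrix, defined through the spectral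
decomposition (junk value `0` for non-Hermitian input). -/
def matLog {ι : Type*} [Fintype ι] [DecidableEq ι] (A : Matrix ι ι ℂ) : Matrix ι ι ℂ :=
  if h : A.IsHermitian then
    (h.eigenvectorUnitary : Matrix ι ι ℂ) *
      Matrix.diagonal (fun i => (Real.log (h.eigenvalues i) : ℂ)) *
      star (h.eigenvectorUnitary : Matrix ι ι ℂ)
  else 0

/-- Complex matrix powers `A ^ z` of a positive definite matrix, via the spectral
decomposition `A = Σ λ_j P_j ↦ Σ λ_j^z P_j` (junk value `0` for non-Hermitian input). -/
def mcpow {ι : Type*} [Fintype ι] [DecidableEq ι] (A : Matrix ι ι ℂ) (z : ℂ) : Matrix ι ι ℂ :=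
  if h : A.IsHermitian then
    (h.eigenvectorUnitary : Matrix ι ι ℂ) *
      Matrix.diagonal (fun i => (h.eigenvalues i : ℂ) ^ z) *
      star (h.eigenvectorUnitary : Matrix ι ι ℂ)
  else 0

/-- The matrix exponential. -/
def mexp {ι : Type*} [Fintype ι] [DecidableEq ι] (A : Matrix ι ι ℂ) : Matrix ι ι ℂ :=
  NormedSpace.exp A

/-- `T_X(Y) = ∫_0^∞ (X+τ)⁻¹ Y (X+τ)⁻¹ dτ` (entrywise Bochner integral). -/
def Tmap {ι : Type*} [Fintype ι] [DecidableEq ι] (X Y : Matrix ι ι ℂ) : Matrix ι ι ℂ :=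
  Matrix.of fun i j =>
    ∫ τ in Set.Ioi (0 : ℝ), ((X + (τ : ℂ) • 1)⁻¹ * Y * (X + (τ : ℂ) • 1)⁻¹) i j

/-- The probability density `β(t) = (π/2)(1 + cosh(π t))⁻¹`. -/
def betaD (t : ℝ) : ℝ := (Real.pi / 2) * (1 + Real.cosh (Real.pi * t))⁻¹

/-- The non-normalized maximally entangled projector `P₁ = |Ω₁⟩⟨Ω₁|`,
`Ω₁ = Σ_l e_l ⊗ e_l`, on `ℂ^d ⊗ ℂ^d`. -/
def P1mat (d : ℕ) : Matrix (Fin d × Fin d) (Fin d × Fin d) ℂ :=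
  Matrix.of fun x y => (if x.1 = x.2 then (1 : ℂ) else 0) * (if y.1 = y.2 then (1 : ℂ) else 0)

/-- Tensor (Kronecker) product of `M` single-site matrices on `(ℂ^d)^{⊗M}`. -/
def bigTensor {M d : ℕ} (B : Fin M → Matrix (Fin d) (Fin d) ℂ) :
    Matrix (Fin M → Fin d) (Fin M → Fin d) ℂ :=
  Matrix.of fun x y => ∏ i : Fin M, B i (x i) (y i)

/-- The condition that the coordinates `a, …, a+m-1` of `x` coincide with the
coordinates `a+m, …, a+2m-1`. -/
def pairCond {M d : ℕ} (a m : ℕ) (x : Fin M → Fin d) : Prop :=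
  ∀ i : ℕ, ∀ (h₁ : a + i < M) (h₂ : a + m + i < M), i < m →
    x ⟨a + i, h₁⟩ = x ⟨a + m + i, h₂⟩

open Classical in
/-- The coefficient `⟨x|Ω_m⟩` of the non-normalized maximally entangled vector `Ω_m`
placed on the `2m` coordinates starting at `a`. -/
def omInd {M d : ℕ} (a m : ℕ) (x : Fin M → Fin d) : ℂ :=
  if pairCond a m x then 1 else 0

/-- The non-normalized maximally entangled projector `P_m = |Ω_m⟩⟨Ω_m|` placed on the `2m`
coordinates starting at `a` of `(ℂ^d)^{⊗M}` (no identity padding: to be used when `2m = M`,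
or as a tensor factor via `omInd`). -/
def embProj (d M a m : ℕ) : Matrix (Fin M → Fin d) (Fin M → Fin d) ℂ :=
  Matrix.of fun x y => omInd a m x * omInd a m y

open Classical in
/-- `B ⊗ I^{⊗(M-p)}` : a matrix `B` on the first `p` factors of `(ℂ^d)^{⊗M}`, tensored with
the identity on the remaining factors. -/
def padId {d : ℕ} (p M : ℕ) (h : p ≤ M) (B : Matrix (Fin p → Fin d) (Fin p → Fin d) ℂ) :
    Matrix (Fin M → Fin d) (Fin M → Fin d) ℂ :=
  Matrix.of fun x y =>
    B (fun i => x (Fin.castLE h i)) (fun i => y (Fin.castLE h i)) *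
      (if ∀ i : Fin M, p ≤ (i : ℕ) → x i = y i then 1 else 0)

/-- Tensor product of `m` two-site matrices, on `(ℂ^d ⊗ ℂ^d)^{⊗m} ≅ (ℂ^d)^{⊗2m}` (the `j`-th
factor acting on the coordinates `2j, 2j+1`). -/
def bigTensor2 {m d : ℕ} (B : Fin m → Matrix (Fin d × Fin d) (Fin d × Fin d) ℂ) :
    Matrix (Fin (2 * m) → Fin d) (Fin (2 * m) → Fin d) ℂ :=
  Matrix.of fun x y => ∏ j : Fin m,
    B j (x ⟨2 * (j : ℕ), by have := j.isLt; omega⟩, x ⟨2 * (j : ℕ) + 1, by have := j.isLt; omega⟩)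
        (y ⟨2 * (j : ℕ), by have := j.isLt; omega⟩, y ⟨2 * (j : ℕ) + 1, by have := j.isLt; omega⟩)

open scoped InnerProductSpace
open RCLike WithLp Matrix

section

variable {𝕜 E ι : Type*} [RCLike 𝕜] [NormedAddCommGroup E] [InnerProductSpace 𝕜 E]

theorem norm_inner_map_le (A : E →L[𝕜] E) (x y : E) : ‖⟪x, A y⟫_𝕜‖ ≤ ‖A‖ * ‖x‖ * ‖y‖ :=
  calc ‖⟪x, A y⟫_𝕜‖ ≤ ‖x‖ * ‖A y‖ := norm_inner_le_norm x (A y)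
    _ ≤ ‖x‖ * (‖A‖ * ‖y‖) := by gcongr; exact A.le_opNorm y
    _ = ‖A‖ * ‖x‖ * ‖y‖ := by ring

theorem abs_re_inner_map_self_le (A : E →L[𝕜] E) (x : E) : |re ⟪x, A x⟫_𝕜| ≤ ‖A‖ * ‖x‖ ^ 2 :=
  (abs_re_le_norm _).trans <| (norm_inner_map_le A x x).trans_eq (by ring)

theorem norm_inner_map_self_sub_le (A : E →L[𝕜] E) (x y : E) :
    ‖⟪x, A x⟫_𝕜 - ⟪y, A y⟫_𝕜‖ ≤ ‖A‖ * (‖x‖ + ‖y‖) * ‖x - y‖ := by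
  have h : ⟪x, A x⟫_𝕜 - ⟪y, A y⟫_𝕜 = ⟪x - y, A x⟫_𝕜 + ⟪y, A (x - y)⟫_𝕜 := by
    simp only [inner_sub_left, map_sub, inner_sub_right]; ring
  calc ‖⟪x, A x⟫_𝕜 - ⟪y, A y⟫_𝕜‖ ≤ ‖⟪x - y, A x⟫_𝕜‖ + ‖⟪y, A (x - y)⟫_𝕜‖ := h ▸ norm_add_le _ _
    _ ≤ ‖A‖ * ‖x - y‖ * ‖x‖ + ‖A‖ * ‖y‖ * ‖x - y‖ :=
      add_le_add (norm_inner_map_le A _ _) (norm_inner_map_le A _ _)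
    _ = ‖A‖ * (‖x‖ + ‖y‖) * ‖x - y‖ := by ring

theorem norm_sub_inner_smul_sq {v : E} (hv : ‖v‖ = 1) (x : E) :
    ‖x - ⟪v, x⟫_𝕜 • v‖ ^ 2 = ‖x‖ ^ 2 - ‖⟪v, x⟫_𝕜‖ ^ 2 := by
  rw [@norm_sub_sq 𝕜, inner_smul_right, ← inner_conj_symm x v, mul_conj, norm_smul, hv]
  norm_cast
  ring

theorem inner_smul_map_smul_self (A : E →L[𝕜] E) (c : 𝕜) (v : E) :
    ⟪c • v, A (c • v)⟫_𝕜 = (‖c‖ ^ 2 : ℝ) * ⟪v, A v⟫_𝕜 := by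
  rw [map_smul, inner_smul_left, inner_smul_right, ← mul_assoc, RCLike.conj_mul]
  norm_cast

variable [Fintype ι] {A : E →L[𝕜] E} {v : E} {t : ℝ} {b : OrthonormalBasis ι 𝕜 E} {μ : ι → ℝ}

-- In what follows, `hb` says that `b` is an orthonormal eigenbasis of `A - t (1 - |v⟩⟨v|)`,
-- with eigenvalues `μ`.
theorem eigenvalue_eq_re_inner_map_sub
    (hb : ∀ i, A (b i) - (t : 𝕜) • (b i - ⟪v, b i⟫_𝕜 • v) = (μ i : 𝕜) • b i) (i : ι) :
    μ i = re ⟪b i, A (b i)⟫_𝕜 - t * (1 - ‖⟪v, b i⟫_𝕜‖ ^ 2) := by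
  have h := congrArg (fun x => re ⟪b i, x⟫_𝕜) (hb i)
  simp only [inner_sub_right, inner_smul_right, inner_self_eq_norm_sq_to_K, b.orthonormal.1 i,
    ← inner_conj_symm (b i) v, mul_conj] at h
  norm_cast at h
  simpa [mul_comm] using h.symm

theorem inner_map_eq_eigenvalue_mul (hA : (A : E →ₗ[𝕜] E).IsSymmetric) (hv : ‖v‖ = 1)
    (hb : ∀ i, A (b i) - (t : 𝕜) • (b i - ⟪v, b i⟫_𝕜 • v) = (μ i : 𝕜) • b i) (i : ι) :
    ⟪A v, b i⟫_𝕜 = μ i * ⟪v, b i⟫_𝕜 := by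
  have h := congrArg (fun x => ⟪v, x⟫_𝕜) (hb i)
  simp only [inner_sub_right, inner_smul_right, inner_self_eq_norm_sq_to_K, hv] at h
  exact (hA v (b i)).trans (by simpa using h)

theorem re_inner_map_self_eq_sum (hA : (A : E →ₗ[𝕜] E).IsSymmetric) (hv : ‖v‖ = 1)
    (hb : ∀ i, A (b i) - (t : 𝕜) • (b i - ⟪v, b i⟫_𝕜 • v) = (μ i : 𝕜) • b i) :
    re ⟪v, A v⟫_𝕜 = ∑ i, μ i * ‖⟪v, b i⟫_𝕜‖ ^ 2 := by
  suffices h : ⟪v, A v⟫_𝕜 = ((∑ i, μ i * ‖⟪v, b i⟫_𝕜‖ ^ 2 : ℝ) : 𝕜) by rw [h, ofReal_re]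
  rw [← b.sum_inner_mul_inner]
  push_cast
  refine Finset.sum_congr rfl fun i _ => ?_
  rw [← inner_conj_symm (b i) (A v), inner_map_eq_eigenvalue_mul hA hv hb, map_mul, conj_ofReal,
    mul_left_comm, mul_conj]

theorem re_inner_map_self_le_eigenvalue (hA : (A : E →ₗ[𝕜] E).IsSymmetric) (hv : ‖v‖ = 1)
    (hb : ∀ i, A (b i) - (t : 𝕜) • (b i - ⟪v, b i⟫_𝕜 • v) = (μ i : 𝕜) • b i)
    {i₀ : ι} (hmax : ∀ i, μ i ≤ μ i₀) : re ⟪v, A v⟫_𝕜 ≤ μ i₀ :=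
  calc re ⟪v, A v⟫_𝕜 = ∑ i, μ i * ‖⟪v, b i⟫_𝕜‖ ^ 2 := re_inner_map_self_eq_sum hA hv hb
    _ ≤ ∑ i, μ i₀ * ‖⟪v, b i⟫_𝕜‖ ^ 2 := by gcongr with i; exact hmax i
    _ = μ i₀ := by rw [← Finset.mul_sum, b.sum_sq_norm_inner_left, hv, one_pow, mul_one]

theorem mul_one_sub_norm_inner_sq_le (hA : (A : E →ₗ[𝕜] E).IsSymmetric) (hv : ‖v‖ = 1)
    (hb : ∀ i, A (b i) - (t : 𝕜) • (b i - ⟪v, b i⟫_𝕜 • v) = (μ i : 𝕜) • b i)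
    {i₀ : ι} (hmax : ∀ i, μ i ≤ μ i₀) : t * (1 - ‖⟪v, b i₀⟫_𝕜‖ ^ 2) ≤ 2 * ‖A‖ := by
  have h₁ := eigenvalue_eq_re_inner_map_sub hb i₀
  have h₂ := re_inner_map_self_le_eigenvalue hA hv hb hmax
  have h₃ := abs_le.mp (abs_re_inner_map_self_le A (b i₀))
  have h₄ := abs_le.mp (abs_re_inner_map_self_le A v)
  rw [b.orthonormal.1 i₀, one_pow, mul_one] at h₃
  rw [hv, one_pow, mul_one] at h₄
  linarith

theorem abs_eigenvalue_add_le (hA : (A : E →ₗ[𝕜] E).IsSymmetric) (hv : ‖v‖ = 1) (ht : 0 ≤ t)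
    (hb : ∀ i, A (b i) - (t : 𝕜) • (b i - ⟪v, b i⟫_𝕜 • v) = (μ i : 𝕜) • b i)
    {i₀ : ι} (hmax : ∀ i, μ i ≤ μ i₀) {i : ι} (hi : i ≠ i₀) : |μ i + t| ≤ 3 * ‖A‖ := by
  have hpair : ‖⟪v, b i⟫_𝕜‖ ^ 2 + ‖⟪v, b i₀⟫_𝕜‖ ^ 2 ≤ 1 := by
    classical
    rw [← Finset.sum_pair hi (f := fun j => ‖⟪v, b j⟫_𝕜‖ ^ 2), ← one_pow 2, ← hv,
      ← b.sum_sq_norm_inner_left]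
    exact Finset.sum_le_sum_of_subset_of_nonneg (Finset.subset_univ _) fun _ _ _ => by positivity
  have h₁ := eigenvalue_eq_re_inner_map_sub hb i
  have h₂ := mul_one_sub_norm_inner_sq_le hA hv hb hmax
  have h₃ := abs_le.mp (abs_re_inner_map_self_le A (b i))
  rw [b.orthonormal.1 i, one_pow, mul_one] at h₃
  have h₄ : t * ‖⟪v, b i⟫_𝕜‖ ^ 2 ≤ t * (1 - ‖⟪v, b i₀⟫_𝕜‖ ^ 2) := by gcongr; linarith
  have h₅ : 0 ≤ t * ‖⟪v, b i⟫_𝕜‖ ^ 2 := by positivity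
  rw [abs_le]
  constructor <;> linarith

theorem eigenvalue_le_re_inner_map_self_add (hA : (A : E →ₗ[𝕜] E).IsSymmetric) (hv : ‖v‖ = 1)
    (ht : 0 < t) (hb : ∀ i, A (b i) - (t : 𝕜) • (b i - ⟪v, b i⟫_𝕜 • v) = (μ i : 𝕜) • b i)
    {i₀ : ι} (hmax : ∀ i, μ i ≤ μ i₀) :
    μ i₀ ≤ re ⟪v, A v⟫_𝕜 + (‖A‖ * (2 * ‖A‖ / t) + 2 * ‖A‖ * √(2 * ‖A‖ / t)) := by
  set x := b i₀
  set c := ⟪v, x⟫_𝕜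
  set δ := 1 - ‖c‖ ^ 2
  have hx : ‖x‖ = 1 := b.orthonormal.1 i₀
  have hc : ‖c‖ ≤ 1 := by simpa [hv, hx] using norm_inner_le_norm (𝕜 := 𝕜) v x
  have hδ : 0 ≤ δ := by simp only [δ]; nlinarith [norm_nonneg c]
  have hδt : δ ≤ 2 * ‖A‖ / t := by
    rw [le_div_iff₀ ht, mul_comm]; exact mul_one_sub_norm_inner_sq_le hA hv hb hmax
  have hdist : ‖x - c • v‖ = √δ := by
    rw [show δ = ‖x - c • v‖ ^ 2 by rw [norm_sub_inner_smul_sq hv, hx, one_pow],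
      Real.sqrt_sq (norm_nonneg _)]
  -- `x` is within `√δ` of `c • v`, whose Rayleigh quotient is `(1 - δ)⟪v, A v⟫`.
  have hnear : re ⟪x, A x⟫_𝕜 ≤ (1 - δ) * re ⟪v, A v⟫_𝕜 + 2 * ‖A‖ * √δ := by
    have h := norm_inner_map_self_sub_le A x (c • v)
    rw [inner_smul_map_smul_self, hdist, hx, norm_smul, hv, mul_one] at h
    have h' := (re_le_norm _).trans h
    rw [map_sub, re_ofReal_mul] at h'
    have hcδ : ‖c‖ ^ 2 = 1 - δ := by simp only [δ]; ring
    rw [hcδ] at h'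
    nlinarith [mul_nonneg (mul_nonneg (sub_nonneg.2 hc) (norm_nonneg A)) (Real.sqrt_nonneg δ)]
  have hrv := abs_le.mp (abs_re_inner_map_self_le A v)
  rw [hv, one_pow, mul_one] at hrv
  have h₁ := eigenvalue_eq_re_inner_map_sub hb i₀
  have h₂ : √δ ≤ √(2 * ‖A‖ / t) := Real.sqrt_le_sqrt hδt
  nlinarith [mul_nonneg ht.le hδ, mul_le_mul_of_nonneg_left hδt (norm_nonneg A),
    mul_le_mul_of_nonneg_left h₂ (norm_nonneg A), mul_le_mul_of_nonneg_left hrv.1 hδ]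

end

theorem EuclideanSpace.norm_toLp_eq_one {𝕜 n : Type*} [RCLike 𝕜] [Fintype n] {v : n → 𝕜}
    (hv : star v ⬝ᵥ v = 1) : ‖toLp 2 v‖ = 1 := by
  rw [@norm_eq_sqrt_re_inner 𝕜, EuclideanSpace.inner_toLp_toLp, dotProduct_comm, hv, one_re,
    Real.sqrt_one]

namespace Matrix

variable {𝕜 n : Type*} [RCLike 𝕜] [Fintype n]

theorem mulVec_eq_sub_of_ker_eq_span {P : Matrix n n 𝕜} (hP : P.IsHermitian) (hP2 : P * P = P)
    {v : n → 𝕜} (hv : star v ⬝ᵥ v = 1) (hker : ∀ w, P *ᵥ w = 0 ↔ ∃ c : 𝕜, w = c • v)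
    (w : n → 𝕜) : P *ᵥ w = w - (star v ⬝ᵥ w) • v := by
  have hvP : star v ᵥ* P = 0 := by
    rw [← hP.eq, ← star_mulVec, (hker v).2 ⟨1, (one_smul 𝕜 v).symm⟩, star_zero]
  obtain ⟨c, hc⟩ := (hker (w - P *ᵥ w)).1 (by rw [mulVec_sub, mulVec_mulVec, hP2, sub_self])
  have hcw : c = star v ⬝ᵥ w := by
    simpa [hv, dotProduct_sub, dotProduct_mulVec, hvP] using (congrArg (star v ⬝ᵥ ·) hc).symm
  rw [← hcw, ← hc]
  abel

variable [DecidableEq n]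

theorem toEuclideanCLM_eq_sub_inner_smul {P : Matrix n n 𝕜} (hP : P.IsHermitian)
    (hP2 : P * P = P) {v : n → 𝕜} (hv : star v ⬝ᵥ v = 1)
    (hker : ∀ w, P *ᵥ w = 0 ↔ ∃ c : 𝕜, w = c • v) (x : EuclideanSpace 𝕜 n) :
    toEuclideanCLM (n := n) (𝕜 := 𝕜) P x = x - ⟪toLp 2 v, x⟫_𝕜 • toLp 2 v := by
  apply ofLp_injective
  rw [ofLp_toEuclideanCLM, mulVec_eq_sub_of_ker_eq_span hP hP2 hv hker,
    EuclideanSpace.inner_eq_star_dotProduct, dotProduct_comm]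
  rfl

theorem IsHermitian.toEuclideanCLM_eigenvectorBasis {M : Matrix n n 𝕜} (hM : M.IsHermitian)
    (i : n) : toEuclideanCLM (n := n) (𝕜 := 𝕜) M (hM.eigenvectorBasis i) =
      (hM.eigenvalues i : 𝕜) • hM.eigenvectorBasis i := by
  apply ofLp_injective
  rw [ofLp_toEuclideanCLM, hM.mulVec_eigenvectorBasis, ofLp_smul, real_smul_eq_coe_smul (K := 𝕜)]

theorem inner_toLp_toEuclideanCLM_toLp (A : Matrix n n 𝕜) (v : n → 𝕜) :
    ⟪toLp 2 v, toEuclideanCLM (n := n) (𝕜 := 𝕜) A (toLp 2 v)⟫_𝕜 = star v ⬝ᵥ A *ᵥ v := by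
  rw [toEuclideanCLM_toLp, EuclideanSpace.inner_toLp_toLp, dotProduct_comm]

open scoped Matrix.Norms.L2Operator in
theorem IsHermitian.eigenvalues_sub_smul_bounds {A P : Matrix n n 𝕜} (hA : A.IsHermitian)
    (hP : P.IsHermitian) (hP2 : P * P = P) {v : n → 𝕜} (hv : star v ⬝ᵥ v = 1)
    (hker : ∀ w, P *ᵥ w = 0 ↔ ∃ c : 𝕜, w = c • v) {t : ℝ} (ht : 0 < t)
    (h : (A - (t : 𝕜) • P).IsHermitian) {i₀ : n} (hmax : ∀ i, h.eigenvalues i ≤ h.eigenvalues i₀) :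
    (re (star v ⬝ᵥ A *ᵥ v) ≤ h.eigenvalues i₀ ∧
      h.eigenvalues i₀ ≤ re (star v ⬝ᵥ A *ᵥ v) + (‖A‖ * (2 * ‖A‖ / t) + 2 * ‖A‖ * √(2 * ‖A‖ / t))) ∧
    ∀ i ≠ i₀, |h.eigenvalues i + t| ≤ 3 * ‖A‖ := by
  have hA' : (toEuclideanCLM (n := n) (𝕜 := 𝕜) A :
      EuclideanSpace 𝕜 n →ₗ[𝕜] EuclideanSpace 𝕜 n).IsSymmetric :=
    isSymmetric_toEuclideanLin_iff.2 hA
  have hv' := EuclideanSpace.norm_toLp_eq_one hv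
  have hb (i : n) : toEuclideanCLM (n := n) (𝕜 := 𝕜) A (h.eigenvectorBasis i) -
      (t : 𝕜) • (h.eigenvectorBasis i - ⟪toLp 2 v, h.eigenvectorBasis i⟫_𝕜 • toLp 2 v) =
      (h.eigenvalues i : 𝕜) • h.eigenvectorBasis i := by
    rw [← toEuclideanCLM_eq_sub_inner_smul hP hP2 hv hker, ← h.toEuclideanCLM_eigenvectorBasis,
      map_sub, map_smul]
    rfl
  rw [← inner_toLp_toEuclideanCLM_toLp]
  exact ⟨⟨re_inner_map_self_le_eigenvalue hA' hv' hb hmax,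
    eigenvalue_le_re_inner_map_self_add hA' hv' ht hb hmax⟩,
    fun i hi => abs_eigenvalue_add_le hA' hv' ht.le hb hmax hi⟩

end Matrix

open Filter Topology

theorem tendsto_rayleigh_error (K : ℝ) :
    Tendsto (fun t : ℝ => K * (2 * K / t) + 2 * K * √(2 * K / t)) atTop (𝓝 0) := by
  have h : Tendsto (fun t : ℝ => 2 * K / t) atTop (𝓝 0) := tendsto_const_nhds.div_atTop tendsto_id
  simpa using (h.const_mul K).add (h.sqrt.const_mul (2 * K))

theorem tendsto_div_neg_one_of_abs_add_le {f : ℝ → ℝ} {C : ℝ} (h : ∀ᶠ t in atTop, |f t + t| ≤ C) :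
    Tendsto (fun t => f t / t) atTop (𝓝 (-1)) := by
  have hC : Tendsto (fun t : ℝ => C / t) atTop (𝓝 0) := tendsto_const_nhds.div_atTop tendsto_id
  have h₀ : Tendsto (fun t => (f t + t) / t) atTop (𝓝 0) := by
    refine squeeze_zero_norm' ?_ hC
    filter_upwards [h, eventually_gt_atTop 0] with t ht htpos
    rw [Real.norm_eq_abs, abs_div, abs_of_pos htpos]
    gcongr
  refine (zero_sub (1 : ℝ) ▸ h₀.sub_const 1).congr' ?_
  filter_upwards [eventually_ne_atTop 0] with t ht
  field_simp
  ring

open Matrix in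
/-- Asymptotics of the eigenvalues of `A − tP` : one eigenvalue tends to `⟨v, Av⟩` and the
remaining `m − 1` eigenvalues are `−t + o(t)`. -/
theorem eigenvalues_sub_proj_asymptotics {m : ℕ} (hm : 2 ≤ m)
    (A P : Matrix (Fin m) (Fin m) ℂ)
    (hA : A.IsHermitian) (hP : P.IsHermitian) (hP2 : P * P = P)
    (v : Fin m → ℂ) (hv : star v ⬝ᵥ v = 1)
    (hker : ∀ w : Fin m → ℂ, P.mulVec w = 0 ↔ ∃ c : ℂ, w = c • v) :
    ∃ lam : ℝ → Fin m → ℝ,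
      (∀ t : ℝ, 0 < t →
        ∃ (h : (A - (t : ℂ) • P).IsHermitian) (σ : Equiv.Perm (Fin m)),
          ∀ i, lam t i = h.eigenvalues (σ i)) ∧
      Filter.Tendsto (fun t => lam t ⟨0, by omega⟩) Filter.atTop
        (nhds (star v ⬝ᵥ A.mulVec v).re) ∧
      ∀ j : Fin m, j ≠ ⟨0, by omega⟩ →
        Filter.Tendsto (fun t => lam t j / t) Filter.atTop (nhds (-1)) := by
  have hM (t : ℝ) : (A - (t : ℂ) • P).IsHermitian := hA.sub (hP.smul (Complex.conj_ofReal t))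
  open scoped Matrix.Norms.L2Operator in set K := ‖A‖
  set n₀ : Fin m := ⟨0, by omega⟩
  have : Nonempty (Fin m) := ⟨n₀⟩
  choose i₀ hi₀ using fun t => Finite.exists_max (hM t).eigenvalues
  have hbounds (t : ℝ) (ht : 0 < t) :=
    hA.eigenvalues_sub_smul_bounds hP hP2 hv hker ht (hM t) (hi₀ t)
  refine ⟨fun t i => (hM t).eigenvalues (Equiv.swap n₀ (i₀ t) i),
    fun t _ => ⟨hM t, _, fun _ => rfl⟩, ?_, fun j hj => ?_⟩
  · simp only [Equiv.swap_apply_left]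
    refine tendsto_of_tendsto_of_tendsto_of_le_of_le' tendsto_const_nhds
      (by simpa using tendsto_const_nhds.add (tendsto_rayleigh_error K)) ?_ ?_ <;>
    filter_upwards [eventually_gt_atTop 0] with t ht
    exacts [(hbounds t ht).1.1, (hbounds t ht).1.2]
  · refine tendsto_div_neg_one_of_abs_add_le (C := 3 * K) ?_
    filter_upwards [eventually_gt_atTop 0] with t ht
    exact (hbounds t ht).2 _ (by simpa [Equiv.swap_apply_eq_iff] using hj)

end
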